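/- Let V be a 2σ0-dimensional F_p-vector space with a non-degenerate, non-neutral symmetric bilinear form and let K ⊆ V ⊗ k be a strictly characteristic subspace, i.e. a characteristic subspace with K ∩ V = 0 (Artin invariant σ0). Assume that the subspace l_K = K ∩ φ(K) ∩ ⋯ ∩ φ^{σ0−1}(K) is 1-dimensional over k, and let e be a generator of l_K. Then the assignment B + K ↦ ⟨B, φ^{−(σ0−1)}(e)⟩ is a well-defined isomorphism of abelian groups from U(K) = {B ∈ V ⊗ k : B − φ(B) ∈ K + φ(K)}/K onto the additive group (k, +). -/

import Mathlib

open TensorProduct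

section Basics

variable (p : ℕ) [Fact p.Prime]
variable (k : Type*) [Field k] [CharP k p] [Algebra (ZMod p) k]

/-- The `p`-th power map on `k` as a `ZMod p`-linear map. -/
noncomputable def frobL : k →ₗ[ZMod p] k where
  toFun x := x ^ p
  map_add' x y := add_pow_char x y p
  map_smul' c x := by
    simp only [Algebra.smul_def, mul_pow, RingHom.id_apply]
    congr 1
    rw [← map_pow, ZMod.pow_card]

@[simp] lemma frobL_apply (x : k) : frobL p k x = x ^ p := rfl

instance frobSurj [IsAlgClosed k] : RingHomSurjective (frobenius k p) := by
  constructor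
  intro y
  obtain ⟨z, hz⟩ := IsAlgClosed.exists_pow_nat_eq y (n := p) (Fact.out (p := p.Prime)).pos
  exact ⟨z, by simpa [frobenius_def] using hz⟩

variable (V : Type*) [AddCommGroup V] [Module (ZMod p) V]

private lemma rT_smul (c : k) (m : k ⊗[ZMod p] V) :
    LinearMap.rTensor V (frobL p k) (c • m) = c ^ p • LinearMap.rTensor V (frobL p k) m := by
  induction m using TensorProduct.induction_on with
  | zero => simp
  | tmul a x => simp [TensorProduct.smul_tmul', smul_eq_mul, mul_pow]
  | add x y hx hy => simp [smul_add, hx, hy]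

/-- The Frobenius-semilinear bijection `φ` of `k ⊗ V` determined by `φ(s ⊗ x) = s^p ⊗ x`. -/
noncomputable def phiT : (k ⊗[ZMod p] V) →ₛₗ[frobenius k p] (k ⊗[ZMod p] V) where
  toFun := LinearMap.rTensor V (frobL p k)
  map_add' x y := map_add _ x y
  map_smul' c m := by
    show LinearMap.rTensor V (frobL p k) (c • m) = (frobenius k p) c • LinearMap.rTensor V (frobL p k) m
    rw [rT_smul, frobenius_def]

@[simp] lemma phiT_apply (m : k ⊗[ZMod p] V) :
    phiT p k V m = LinearMap.rTensor V (frobL p k) m := rfl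

/-- A bilinear form is non-degenerate if its radical is zero. -/
def Nondeg {R M : Type*} [CommSemiring R] [AddCommMonoid M] [Module R M]
    (b : M →ₗ[R] M →ₗ[R] R) : Prop :=
  ∀ x, (∀ y, b x y = 0) → x = 0

/-- A bilinear form is non-neutral if there is no totally isotropic subspace of half
dimension. -/
def NonNeutral {R M : Type*} [CommRing R] [AddCommGroup M] [Module R M]
    (b : M →ₗ[R] M →ₗ[R] R) : Prop :=
  ¬ ∃ W : Submodule R M, (∀ x ∈ W, ∀ y ∈ W, b x y = 0) ∧
      2 * Module.finrank R ↥W = Module.finrank R M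

variable {p k V}

/-- A characteristic subspace of `V ⊗ k`, where `dim V = 2σ₀`: a totally isotropic
`k`-subspace of dimension `σ₀` with `dim (K + φ K) = σ₀ + 1`. -/
def IsCharSub [IsAlgClosed k] (σ₀ : ℕ) (b : LinearMap.BilinForm (ZMod p) V)
    (K : Submodule k (k ⊗[ZMod p] V)) : Prop :=
  (∀ x ∈ K, ∀ y ∈ K, b.baseChange k x y = 0) ∧
  Module.finrank k ↥K = σ₀ ∧
  Module.finrank k ↥(K ⊔ K.map (phiT p k V)) = σ₀ + 1

/-- `{x ∈ V : x ⊗ 1 ∈ K}` as an `𝔽_p`-subspace of `V`. -/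
def KcapV (K : Submodule k (k ⊗[ZMod p] V)) : Submodule (ZMod p) V where
  carrier := {x | (1 : k) ⊗ₜ[ZMod p] x ∈ K}
  add_mem' := by
    intro a b ha hb
    simp only [Set.mem_setOf_eq] at *
    rw [TensorProduct.tmul_add]
    exact K.add_mem ha hb
  zero_mem' := by
    simp only [Set.mem_setOf_eq, TensorProduct.tmul_zero]
    exact K.zero_mem
  smul_mem' := by
    intro c x hx
    simp only [Set.mem_setOf_eq] at *
    rw [TensorProduct.tmul_smul]
    exact K.smul_of_tower_mem c hx

end Basics

section Quot

variable {p : ℕ} [Fact p.Prime]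
variable {Vt : Type*} [AddCommGroup Vt] [Module (ZMod p) Vt]

/-- The orthogonal complement of a vector. -/
def perp (b : LinearMap.BilinForm (ZMod p) Vt) (v : Vt) : Submodule (ZMod p) Vt :=
  LinearMap.ker (b v)

lemma self_mem_perp {b : LinearMap.BilinForm (ZMod p) Vt} {v : Vt} (hv : b v v = 0) :
    v ∈ perp b v := LinearMap.mem_ker.mpr hv

/-- The line spanned by an isotropic vector `v`, inside `v^⊥`. -/
noncomputable def lineV (b : LinearMap.BilinForm (ZMod p) Vt) (v : Vt) (hv : b v v = 0) :
    Submodule (ZMod p) (perp b v) :=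
  Submodule.span (ZMod p) {⟨v, self_mem_perp hv⟩}

lemma lineV_le (b : LinearMap.BilinForm (ZMod p) Vt) (v : Vt) (hv : b v v = 0)
    {P : Submodule (ZMod p) (perp b v)}
    (h : (⟨v, self_mem_perp hv⟩ : perp b v) ∈ P) : lineV b v hv ≤ P :=
  Submodule.span_le.mpr (Set.singleton_subset_iff.mpr h)

/-- The quotient `v^⊥ / ⟨v⟩`. -/
noncomputable abbrev Vquot (b : LinearMap.BilinForm (ZMod p) Vt) (v : Vt)
    (hv : b v v = 0) := (perp b v) ⧸ (lineV b v hv)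

/-- Restriction of the form to `v^⊥`. -/
noncomputable def bRes (b : LinearMap.BilinForm (ZMod p) Vt) (v : Vt) :
    LinearMap.BilinForm (ZMod p) (perp b v) :=
  b.compl₁₂ (perp b v).subtype (perp b v).subtype

lemma bRes_apply (b : LinearMap.BilinForm (ZMod p) Vt) (v : Vt) (x y : perp b v) :
    bRes b v x y = b x y := by
  simp [bRes]

noncomputable def bQuotAux (b : LinearMap.BilinForm (ZMod p) Vt) (v : Vt)
    (hsymm : ∀ x y, b x y = b y x) (hv : b v v = 0) :
    (perp b v) →ₗ[ZMod p] (Vquot b v hv) →ₗ[ZMod p] (ZMod p) where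
  toFun x := Submodule.liftQ (lineV b v hv) (bRes b v x) (lineV_le b v hv (by
    rw [LinearMap.mem_ker, bRes_apply, hsymm]
    exact LinearMap.mem_ker.mp x.2))
  map_add' x y := by
    apply LinearMap.ext
    intro z
    obtain ⟨w, rfl⟩ := Submodule.Quotient.mk_surjective _ z
    simp only [Submodule.liftQ_apply, LinearMap.add_apply, bRes_apply,
      Submodule.coe_add, map_add]
  map_smul' c x := by
    apply LinearMap.ext
    intro z
    obtain ⟨w, rfl⟩ := Submodule.Quotient.mk_surjective _ z
    simp only [Submodule.liftQ_apply, LinearMap.smul_apply, bRes_apply,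
      Submodule.coe_smul, map_smul, RingHom.id_apply, smul_eq_mul]

/-- The symmetric bilinear form induced on `v^⊥/⟨v⟩` by the form of `Ṽ`. -/
noncomputable def bQuot (b : LinearMap.BilinForm (ZMod p) Vt) (v : Vt)
    (hsymm : ∀ x y, b x y = b y x) (hv : b v v = 0) :
    LinearMap.BilinForm (ZMod p) (Vquot b v hv) :=
  Submodule.liftQ (lineV b v hv) (bQuotAux b v hsymm hv) (lineV_le b v hv (by
    rw [LinearMap.mem_ker]
    apply LinearMap.ext
    intro z
    obtain ⟨w, rfl⟩ := Submodule.Quotient.mk_surjective _ z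
    simp only [bQuotAux, LinearMap.coe_mk, AddHom.coe_mk, Submodule.liftQ_apply,
      bRes_apply, LinearMap.zero_apply]
    exact LinearMap.mem_ker.mp w.2))

variable (k : Type*) [Field k] [CharP k p] [Algebra (ZMod p) k]

/-- The base change to `k` of the inclusion `v^⊥ ⊆ Ṽ`. -/
noncomputable def iotaPerp (b : LinearMap.BilinForm (ZMod p) Vt) (v : Vt) :
    (k ⊗[ZMod p] ↥(perp b v)) →ₗ[k] (k ⊗[ZMod p] Vt) :=
  LinearMap.baseChange k (perp b v).subtype

/-- The base change to `k` of the quotient map `v^⊥ → v^⊥/⟨v⟩`. -/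
noncomputable def qMap (b : LinearMap.BilinForm (ZMod p) Vt) (v : Vt) (hv : b v v = 0) :
    (k ⊗[ZMod p] ↥(perp b v)) →ₗ[k] (k ⊗[ZMod p] (Vquot b v hv)) :=
  LinearMap.baseChange k (lineV b v hv).mkQ

/-- `π_v(K̃)`: the image of `K̃ ∩ (v^⊥ ⊗ k)` under the quotient map
`v^⊥ ⊗ k → (v^⊥/⟨v⟩) ⊗ k`. -/
noncomputable def piV (b : LinearMap.BilinForm (ZMod p) Vt) (v : Vt) (hv : b v v = 0)
    (K : Submodule k (k ⊗[ZMod p] Vt)) : Submodule k (k ⊗[ZMod p] (Vquot b v hv)) :=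
  (K.comap (iotaPerp k b v)).map (qMap k b v hv)

end Quot
section Decomp

variable {p : ℕ} [Fact p.Prime]
variable {k : Type*} [Field k] [CharP k p] [Algebra (ZMod p) k]
variable {V Vt : Type*} [AddCommGroup V] [Module (ZMod p) V]
  [AddCommGroup Vt] [Module (ZMod p) Vt]

/-- The characteristic subspace `K(B)` of `Ṽ ⊗ k` attached to a characteristic subspace
`K ⊆ V ⊗ k` and a vector `B ∈ V ⊗ k`: the span of `{x + ⟨x,B⟩v : x ∈ K}` together with
`w + B + (B²/2)v`. -/
noncomputable def KB (bV : LinearMap.BilinForm (ZMod p) V) (j : V →ₗ[ZMod p] Vt)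
    (v w : Vt) (K : Submodule k (k ⊗[ZMod p] V)) (B : k ⊗[ZMod p] V) :
    Submodule k (k ⊗[ZMod p] Vt) :=
  Submodule.span k
    (((fun x => LinearMap.baseChange k j x + (bV.baseChange k x B) • ((1 : k) ⊗ₜ[ZMod p] v)) '' K) ∪
      {(1 : k) ⊗ₜ[ZMod p] w + LinearMap.baseChange k j B +
        ((bV.baseChange k B B) / 2) • ((1 : k) ⊗ₜ[ZMod p] v)})

/-- `π_v(K̃)` computed using the fixed orthogonal decomposition `Ṽ = V ⊕ ⟨v,w⟩`:
the subspace of those `x ∈ V ⊗ k` admitting a lift `x + c·(v ⊗ 1)` lying in `K̃`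
(equivalently, whose image in `Ṽ ⊗ k` lies in `K̃ + ⟨v ⊗ 1⟩`). -/
noncomputable def projSub (j : V →ₗ[ZMod p] Vt) (v : Vt)
    (Kt : Submodule k (k ⊗[ZMod p] Vt)) : Submodule k (k ⊗[ZMod p] V) :=
  (Kt ⊔ Submodule.span k {(1 : k) ⊗ₜ[ZMod p] v}).comap (LinearMap.baseChange k j)

lemma mem_projSub {j : V →ₗ[ZMod p] Vt} {v : Vt} {Kt : Submodule k (k ⊗[ZMod p] Vt)}
    (x : k ⊗[ZMod p] V) (c : k)
    (h : LinearMap.baseChange k j x + c • ((1 : k) ⊗ₜ[ZMod p] v) ∈ Kt) :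
    x ∈ projSub j v Kt := by
  have : LinearMap.baseChange k j x
      = (LinearMap.baseChange k j x + c • ((1 : k) ⊗ₜ[ZMod p] v))
        + (-c) • ((1 : k) ⊗ₜ[ZMod p] v) := by
    first | module | simp [add_assoc, ← add_smul] | (rw [add_assoc, ← add_smul]; simp)
  rw [projSub, Submodule.mem_comap, this]
  exact Submodule.add_mem _ (Submodule.mem_sup_left h)
    (Submodule.mem_sup_right (Submodule.smul_mem _ _ (Submodule.mem_span_singleton_self _)))

variable [IsAlgClosed k]

/-- The condition `B - φ(B) ∈ K + φ(K)` defining `U(K)` before quotienting. -/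
def UCond (K : Submodule k (k ⊗[ZMod p] V)) (B : k ⊗[ZMod p] V) : Prop :=
  B - phiT p k V B ∈ K ⊔ K.map (phiT p k V)

/-- `{B ∈ V ⊗ k : B - φ(B) ∈ K + φ(K)}` as an additive group. -/
def Ugrp (K : Submodule k (k ⊗[ZMod p] V)) : AddSubgroup (k ⊗[ZMod p] V) where
  carrier := {B | B - phiT p k V B ∈ K ⊔ K.map (phiT p k V)}
  add_mem' := by
    intro a b ha hb
    simp only [Set.mem_setOf_eq] at *
    have e : a + b - phiT p k V (a + b) = (a - phiT p k V a) + (b - phiT p k V b) := by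
      rw [map_add]; abel
    rw [e]; exact Submodule.add_mem _ ha hb
  zero_mem' := by
    simp only [Set.mem_setOf_eq, map_zero, sub_zero]
    exact Submodule.zero_mem _
  neg_mem' := by
    intro a ha
    simp only [Set.mem_setOf_eq] at *
    have e : -a - phiT p k V (-a) = -(a - phiT p k V a) := by
      rw [map_neg]; abel
    rw [e]; exact Submodule.neg_mem _ ha

lemma mem_Ugrp {K : Submodule k (k ⊗[ZMod p] V)} {B : k ⊗[ZMod p] V} :
    B ∈ Ugrp K ↔ B - phiT p k V B ∈ K ⊔ K.map (phiT p k V) := Iff.rfl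

/-- The group `U(K) = {B : B - φ(B) ∈ K + φ(K)}/K`. -/
noncomputable abbrev UK (K : Submodule k (k ⊗[ZMod p] V)) :=
  (↥(Ugrp K)) ⧸ ((K.toAddSubgroup).addSubgroupOf (Ugrp K))

lemma one_tmul_mem_Ugrp (K : Submodule k (k ⊗[ZMod p] V)) (x : V) :
    (1 : k) ⊗ₜ[ZMod p] x ∈ Ugrp K := by
  have h : phiT p k V ((1 : k) ⊗ₜ[ZMod p] x) = (1 : k) ⊗ₜ[ZMod p] x := by
    rw [phiT_apply, LinearMap.rTensor_tmul, frobL_apply, one_pow]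
  rw [mem_Ugrp, h, sub_self]
  exact Submodule.zero_mem _

/-- The natural map `V → U(K)`, `x ↦ (x ⊗ 1) mod K`. -/
noncomputable def toUK (K : Submodule k (k ⊗[ZMod p] V)) : V →+ UK K :=
  (QuotientAddGroup.mk' ((K.toAddSubgroup).addSubgroupOf (Ugrp K))).comp
    (AddMonoidHom.codRestrict
      (((TensorProduct.mk (ZMod p) k V) (1 : k)).toAddMonoidHom) (Ugrp K)
      (fun x => one_tmul_mem_Ugrp K x))

/-- Iterates `φ^i(K)`. -/
noncomputable def phiPow (i : ℕ) (K : Submodule k (k ⊗[ZMod p] V)) :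
    Submodule k (k ⊗[ZMod p] V) :=
  (fun S : Submodule k (k ⊗[ZMod p] V) => S.map (phiT p k V))^[i] K

end Decomp


/-!
Write `E j = φ^j e'`. Since `e ∈ φ^i K` for `i < σ₀`, the vectors `E 0, …, E (σ₀-1)` lie in `K`.
They are linearly independent: otherwise their span would be a nonzero `φ`-stable subspace of `K`,
and such a subspace contains a nonzero vector of `V`, contradicting `K ∩ V = 0`. So they form a
basis of `K`. Counting dimensions, `K = K^⊥` and `K + φ K = ⟨E 1, …, E (σ₀-1)⟩^⊥`, and since
`⟨φ x, φ y⟩ = ⟨x, y⟩^p`, a vector `B` lies in `U(K)` iff `⟨B, E (j+1)⟩ = ⟨B, E j⟩^p` for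
`j + 1 < σ₀`. Thus the pairings of `B ∈ U(K)` with the basis of `K` are `t, t^p, …, t^(p^(σ₀-1))`
with `t = ⟨B, e'⟩`: they all vanish when `t = 0`, which puts `B` in `K^⊥ = K`, and for any `t`
such a `B` exists because pairings with a basis of `K` can be prescribed arbitrarily.
-/

lemma LinearMap.BilinForm.Nondegenerate.baseChange {F : Type*} (K : Type*) {M : Type*} [Field F]
    [Field K] [Algebra F K] [AddCommGroup M] [Module F M] [FiniteDimensional F M]
    {b : LinearMap.BilinForm F M} (hb : b.Nondegenerate) : (b.baseChange K).Nondegenerate := by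
  classical
  let bv := Module.Free.chooseBasis F M
  rw [LinearMap.BilinForm.nondegenerate_iff_det_ne_zero (Algebra.TensorProduct.basis K bv)]
  rw [LinearMap.BilinForm.nondegenerate_iff_det_ne_zero bv] at hb
  have hmat : LinearMap.BilinForm.toMatrix (Algebra.TensorProduct.basis K bv) (b.baseChange K)
      = (algebraMap F K).mapMatrix (LinearMap.BilinForm.toMatrix bv b) := by
    ext i j
    simp [LinearMap.BilinForm.toMatrix_apply, Algebra.smul_def]
  rw [hmat, ← RingHom.map_det]
  exact (map_ne_zero_iff _ (algebraMap F K).injective).mpr hb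

lemma LinearMap.BilinForm.eq_orthogonal_of_le_of_finrank_le {K M : Type*} [Field K]
    [AddCommGroup M] [Module K M] [FiniteDimensional K M] {b : LinearMap.BilinForm K M}
    (hb : b.Nondegenerate) {S W : Submodule K M} (hSW : S ≤ b.orthogonal W)
    (hdim : Module.finrank K M ≤ Module.finrank K W + Module.finrank K S) :
    S = b.orthogonal W :=
  Submodule.eq_of_le_of_finrank_le hSW (by rw [LinearMap.BilinForm.finrank_orthogonal hb]; omega)

lemma LinearMap.BilinForm.mem_orthogonal_span_iff {R M : Type*} [CommSemiring R]
    [AddCommMonoid M] [Module R M] {b : LinearMap.BilinForm R M} {s : Set M} {x : M} :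
    x ∈ b.orthogonal (Submodule.span R s) ↔ ∀ y ∈ s, b y x = 0 :=
  ⟨fun h y hy => h y (Submodule.subset_span hy),
    fun h _ hy => (Submodule.span_le (p := LinearMap.ker (b.flip x))).mpr h hy⟩

lemma exists_algebraMap_eq_of_pow_eq_self {p : ℕ} [Fact p.Prime] {k : Type*} [Field k]
    [CharP k p] [Algebra (ZMod p) k] {x : k} (hx : x ^ p = x) :
    ∃ a : ZMod p, algebraMap (ZMod p) k a = x := by
  rw [← Subfield.mem_bot_iff_pow_eq_self k p, ← ZMod.fieldRange_castHom_eq_bot p] at hx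
  obtain ⟨a, rfl⟩ := hx
  exact ⟨a, by congr 1; exact Subsingleton.elim _ _⟩

section Frobenius

variable {p : ℕ} [Fact p.Prime] {k : Type*} [Field k] [CharP k p] [Algebra (ZMod p) k]
  {V : Type*} [AddCommGroup V] [Module (ZMod p) V]

local notation "φ" => phiT p k V

lemma phiT_tmul (c : k) (x : V) : φ (c ⊗ₜ[ZMod p] x) = (c ^ p) ⊗ₜ[ZMod p] x := rfl

lemma phiT_injective : Function.Injective φ :=
  Module.Flat.rTensor_preserves_injective_linearMap (frobL p k) (frobenius_inj k p)

lemma baseChange_phiT_phiT (b : LinearMap.BilinForm (ZMod p) V) (x y : k ⊗[ZMod p] V) :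
    b.baseChange k (φ x) (φ y) = b.baseChange k x y ^ p := by
  induction x using TensorProduct.induction_on with
  | zero => simp [zero_pow (Fact.out : p.Prime).ne_zero]
  | add x₁ x₂ h₁ h₂ => simp only [map_add, LinearMap.add_apply, h₁, h₂, add_pow_char]
  | tmul a u =>
    induction y using TensorProduct.induction_on with
    | zero => simp [zero_pow (Fact.out : p.Prime).ne_zero]
    | add y₁ y₂ h₁ h₂ => simp only [map_add, h₁, h₂, add_pow_char]
    | tmul c v =>
      simp only [phiT_tmul, LinearMap.BilinForm.baseChange_tmul, Algebra.smul_def, mul_pow,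
        ← map_pow, ZMod.pow_card]

lemma repr_phiT {ι : Type*} (bv : Module.Basis ι (ZMod p) V) (m : k ⊗[ZMod p] V) (i : ι) :
    (Algebra.TensorProduct.basis k bv).repr (φ m) i
      = (Algebra.TensorProduct.basis k bv).repr m i ^ p := by
  induction m using TensorProduct.induction_on with
  | zero => simp [zero_pow (Fact.out : p.Prime).ne_zero]
  | tmul a x => simp [mul_pow, ← map_pow]
  | add x y hx hy => simp only [map_add, Finsupp.add_apply, hx, hy, add_pow_char]

lemma exists_one_tmul_eq_of_phiT_eq_self {w : k ⊗[ZMod p] V} (hw : φ w = w) :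
    ∃ x : V, (1 : k) ⊗ₜ[ZMod p] x = w := by
  classical
  let bv := Module.Free.chooseBasis (ZMod p) V
  let bk := Algebra.TensorProduct.basis k bv
  have hfix (i) : bk.repr w i ^ p = bk.repr w i := by rw [← repr_phiT, hw]
  choose a ha using fun i => exists_algebraMap_eq_of_pow_eq_self (hfix i)
  refine ⟨∑ i ∈ (bk.repr w).support, a i • bv i, ?_⟩
  conv_rhs => rw [← bk.linearCombination_repr w, Finsupp.linearCombination_apply]
  simp only [TensorProduct.tmul_sum, TensorProduct.tmul_smul, Finsupp.sum, ← ha,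
    algebraMap_smul, bk, Algebra.TensorProduct.basis_apply]

variable [IsAlgClosed k]

/-- A nonzero vector of `W` with minimal support, normalised to have a coordinate `1`, is
`φ`-fixed: otherwise `φ w - w ∈ W` would be a nonzero vector of smaller support. -/
lemma exists_ne_zero_one_tmul_mem_of_map_phiT_le {W : Submodule k (k ⊗[ZMod p] V)}
    (hW : W.map φ ≤ W) (hne : W ≠ ⊥) : ∃ x : V, x ≠ 0 ∧ (1 : k) ⊗ₜ[ZMod p] x ∈ W := by
  classical
  let bk := Algebra.TensorProduct.basis k (Module.Free.chooseBasis (ZMod p) V)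
  obtain ⟨w, ⟨hwW, hw0⟩, hmin⟩ := (measure fun w => (bk.repr w).support.card).wf.has_min
    {w | w ∈ W ∧ w ≠ 0} (Submodule.exists_mem_ne_zero_of_ne_bot hne)
  obtain ⟨i, hi⟩ : (bk.repr w).support.Nonempty :=
    Finsupp.support_nonempty_iff.mpr (bk.repr.map_ne_zero_iff.mpr hw0)
  have hci : bk.repr w i ≠ 0 := Finsupp.mem_support_iff.mp hi
  set w' := (bk.repr w i)⁻¹ • w with hw'
  have hw'W : w' ∈ W := W.smul_mem _ hwW
  have hw'i : bk.repr w' i = 1 := by simp [hw', hci]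
  have hsupp : (bk.repr w').support = (bk.repr w).support := by
    rw [hw', map_smul, Finsupp.support_smul_eq (inv_ne_zero hci)]
  have hfix : φ w' = w' := by
    by_contra hne'
    refine hmin (φ w' - w') ⟨W.sub_mem (hW (Submodule.mem_map_of_mem hw'W)) hw'W,
      sub_ne_zero.mpr hne'⟩ (Finset.card_lt_card ?_)
    have hrepr (j) : bk.repr (φ w' - w') j = bk.repr w' j ^ p - bk.repr w' j := by
      rw [map_sub, Finsupp.sub_apply, repr_phiT]
    rw [← hsupp, Finset.ssubset_iff_of_subset]
    · refine ⟨i, by simp [hw'i], ?_⟩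
      rw [Finsupp.notMem_support_iff, hrepr, hw'i, one_pow, sub_self]
    · intro j hj
      rw [Finsupp.mem_support_iff] at hj ⊢
      intro h0
      rw [hrepr, h0, zero_pow (Fact.out : p.Prime).ne_zero, sub_zero] at hj
      exact hj rfl
  obtain ⟨x, hx⟩ := exists_one_tmul_eq_of_phiT_eq_self hfix
  refine ⟨x, ?_, hx ▸ hw'W⟩
  rintro rfl
  simp [← hx] at hw'i

lemma phiPow_succ (i : ℕ) (K : Submodule k (k ⊗[ZMod p] V)) :
    phiPow (i + 1) K = (phiPow i K).map φ :=
  Function.iterate_succ_apply' _ i K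

lemma mem_phiPow_iff {i : ℕ} {K : Submodule k (k ⊗[ZMod p] V)} {y : k ⊗[ZMod p] V} :
    y ∈ phiPow i K ↔ ∃ x ∈ K, φ^[i] x = y := by
  induction i generalizing y with
  | zero => simp [phiPow]
  | succ i ih =>
    simp only [phiPow_succ, Submodule.mem_map, ih, Function.iterate_succ_apply']
    constructor
    · rintro ⟨_, ⟨x, hx, rfl⟩, rfl⟩
      exact ⟨x, hx, rfl⟩
    · rintro ⟨x, hx, rfl⟩
      exact ⟨_, ⟨x, hx, rfl⟩, rfl⟩

lemma iterate_mem_of_mem_iInf_phiPow {n : ℕ} {K : Submodule k (k ⊗[ZMod p] V)}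
    {e e' : k ⊗[ZMod p] V} (he : e ∈ ⨅ i ∈ Finset.range n, phiPow i K) (he' : φ^[n - 1] e' = e)
    {j : ℕ} (hj : j < n) : φ^[j] e' ∈ K := by
  have hmem : e ∈ phiPow (n - 1 - j) K :=
    (Submodule.mem_iInf _).mp ((Submodule.mem_iInf _).mp he _) (Finset.mem_range.mpr (by omega))
  obtain ⟨x, hx, hxe⟩ := mem_phiPow_iff.mp hmem
  have hje : φ^[n - 1 - j] (φ^[j] e') = e := by
    rw [← Function.iterate_add_apply, Nat.sub_add_cancel (by omega), he']
  exact phiT_injective.iterate _ (hxe.trans hje.symm) ▸ hx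

lemma linearIndependent_iterate_phiT {K : Submodule k (k ⊗[ZMod p] V)} (hK : KcapV K = ⊥)
    {e' : k ⊗[ZMod p] V} (he' : e' ≠ 0) {n : ℕ} (hE : ∀ j < n, φ^[j] e' ∈ K) :
    LinearIndependent k (fun i : Fin n => φ^[i] e') := by
  induction n with
  | zero => exact linearIndependent_empty_type
  | succ n ih =>
    rw [← Fin.snoc_init_self (fun i : Fin (n + 1) => φ^[i] e'), linearIndependent_finSnoc]
    refine ⟨ih fun j hj => hE j (by omega), fun hmem => ?_⟩
    set W := Submodule.span k (Set.range (Fin.init fun i : Fin (n + 1) => φ^[i] e'))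
    have hWK : W ≤ K := Submodule.span_le.mpr (by rintro _ ⟨i, rfl⟩; exact hE i (by omega))
    have hW : W.map φ ≤ W := by
      rw [Submodule.map_span, Submodule.span_le]
      rintro _ ⟨_, ⟨i, rfl⟩, rfl⟩
      change φ (φ^[i] e') ∈ W
      rw [← Function.iterate_succ_apply' (⇑φ)]
      rcases (Nat.succ_le_of_lt i.2).lt_or_eq with hi | hi
      · exact Submodule.subset_span ⟨⟨i + 1, hi⟩, rfl⟩
      · rwa [hi, ← Fin.val_last n]
    have hne : W ≠ ⊥ := by
      rintro hbot
      rw [hbot, Submodule.mem_bot, Fin.val_last] at hmem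
      exact he' (phiT_injective.iterate n (hmem.trans (Function.iterate_fixed (map_zero _) n).symm))
    obtain ⟨x, hx0, hx⟩ := exists_ne_zero_one_tmul_mem_of_map_phiT_le hW hne
    have hxK : x ∈ KcapV K := hWK hx
    rw [hK, Submodule.mem_bot] at hxK
    exact hx0 hxK

variable {σ0 : ℕ} {bV : LinearMap.BilinForm (ZMod p) V} {K : Submodule k (k ⊗[ZMod p] V)}

lemma IsCharSub.pos (hK : IsCharSub σ0 bV K) : 0 < σ0 := by
  by_contra h0
  have hsup := hK.2.2
  have : FiniteDimensional k ↥(K ⊔ K.map φ) := FiniteDimensional.of_finrank_pos (by omega)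
  have : FiniteDimensional k K := Submodule.finiteDimensional_of_le (le_sup_left (b := K.map φ))
  have hK0 : K = ⊥ := Submodule.finrank_eq_zero.mp (by have := hK.2.1; omega)
  rw [hK0, Submodule.map_bot, sup_bot_eq, finrank_bot] at hsup
  omega

variable [FiniteDimensional (ZMod p) V]

lemma IsCharSub.orthogonal_eq (hb : (bV.baseChange k).Nondegenerate)
    (hdim : Module.finrank (ZMod p) V = 2 * σ0) (hK : IsCharSub σ0 bV K) :
    (bV.baseChange k).orthogonal K = K :=
  (LinearMap.BilinForm.eq_orthogonal_of_le_of_finrank_le hb (fun x hx y hy => hK.1 y hy x hx)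
    (by rw [Module.finrank_baseChange, hdim, hK.2.1]; omega)).symm

variable {e' : k ⊗[ZMod p] V}

lemma span_iterate_phiT_eq (hK : IsCharSub σ0 bV K) (hE : ∀ j < σ0, φ^[j] e' ∈ K)
    (hind : LinearIndependent k (fun i : Fin σ0 => φ^[i] e')) :
    Submodule.span k (Set.range fun i : Fin σ0 => φ^[i] e') = K :=
  Submodule.eq_of_le_of_finrank_le (Submodule.span_le.mpr (by rintro _ ⟨i, rfl⟩; exact hE i i.2))
    (by rw [hK.2.1, finrank_span_eq_card hind, Fintype.card_fin])

lemma mem_of_forall_baseChange_iterate_phiT_eq_zero (hb : (bV.baseChange k).Nondegenerate)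
    (hsymm : (bV.baseChange k).IsSymm) (hdim : Module.finrank (ZMod p) V = 2 * σ0)
    (hK : IsCharSub σ0 bV K) (hE : ∀ j < σ0, φ^[j] e' ∈ K)
    (hind : LinearIndependent k (fun i : Fin σ0 => φ^[i] e')) {B : k ⊗[ZMod p] V}
    (hB : ∀ j < σ0, bV.baseChange k B (φ^[j] e') = 0) : B ∈ K := by
  rw [← hK.orthogonal_eq hb hdim, ← span_iterate_phiT_eq hK hE hind,
    LinearMap.BilinForm.mem_orthogonal_span_iff, Set.forall_mem_range]
  exact fun i => (hsymm.eq _ _).trans (hB i i.2)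

/-- By rank–nullity, since the kernel of `B ↦ (⟨B, φ^i e'⟩)ᵢ` lies in `K`. -/
lemma exists_baseChange_iterate_phiT_eq (hb : (bV.baseChange k).Nondegenerate)
    (hsymm : (bV.baseChange k).IsSymm) (hdim : Module.finrank (ZMod p) V = 2 * σ0)
    (hK : IsCharSub σ0 bV K) (hE : ∀ j < σ0, φ^[j] e' ∈ K)
    (hind : LinearIndependent k (fun i : Fin σ0 => φ^[i] e')) (c : Fin σ0 → k) :
    ∃ B, ∀ i : Fin σ0, bV.baseChange k B (φ^[i] e') = c i := by
  let T : (k ⊗[ZMod p] V) →ₗ[k] (Fin σ0 → k) :=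
    LinearMap.pi fun i => (bV.baseChange k).flip (φ^[i] e')
  have hker : LinearMap.ker T ≤ K := fun B hB =>
    mem_of_forall_baseChange_iterate_phiT_eq_zero hb hsymm hdim hK hE hind
      fun j hj => congr_fun (LinearMap.mem_ker.mp hB) ⟨j, hj⟩
  have hrange : LinearMap.range T = ⊤ := by
    refine Submodule.eq_top_of_finrank_eq (le_antisymm (Submodule.finrank_le _) ?_)
    have hsum := T.finrank_range_add_finrank_ker
    have hkerK := Submodule.finrank_mono hker
    rw [Module.finrank_baseChange, hdim] at hsum
    rw [Module.finrank_fin_fun]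
    have := hK.2.1
    omega
  obtain ⟨B, hB⟩ := LinearMap.range_eq_top.mp hrange c
  exact ⟨B, congr_fun hB⟩

lemma mem_sup_map_phiT_iff (hb : (bV.baseChange k).Nondegenerate)
    (hsymm : (bV.baseChange k).IsSymm) (hdim : Module.finrank (ZMod p) V = 2 * σ0)
    (hK : IsCharSub σ0 bV K) (hE : ∀ j < σ0, φ^[j] e' ∈ K)
    (hind : LinearIndependent k (fun i : Fin σ0 => φ^[i] e')) {y : k ⊗[ZMod p] V} :
    y ∈ K ⊔ K.map φ ↔ ∀ j, j + 1 < σ0 → bV.baseChange k y (φ^[j + 1] e') = 0 := by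
  let f : Fin (σ0 - 1) → k ⊗[ZMod p] V := fun i => φ^[i + 1] e'
  have hf : LinearIndependent k f :=
    hind.comp (fun i : Fin (σ0 - 1) => (⟨i + 1, by omega⟩ : Fin σ0)) fun i j h => by
      simpa [Fin.ext_iff] using h
  have hsup : K ⊔ K.map φ = (bV.baseChange k).orthogonal (Submodule.span k (Set.range f)) := by
    refine LinearMap.BilinForm.eq_orthogonal_of_le_of_finrank_le hb (sup_le ?_ ?_) ?_
    · intro x hx
      rw [LinearMap.BilinForm.mem_orthogonal_span_iff, Set.forall_mem_range]
      exact fun i => hK.1 _ (hE _ (by omega)) _ hx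
    · rintro _ ⟨x, hx, rfl⟩
      rw [LinearMap.BilinForm.mem_orthogonal_span_iff, Set.forall_mem_range]
      intro i
      rw [show f i = φ (φ^[i] e') from Function.iterate_succ_apply' _ _ _, baseChange_phiT_phiT,
        hK.1 _ (hE _ (by omega)) _ hx, zero_pow (Fact.out : p.Prime).ne_zero]
    · rw [Module.finrank_baseChange, hdim, finrank_span_eq_card hf, Fintype.card_fin, hK.2.2]
      omega
  rw [hsup, LinearMap.BilinForm.mem_orthogonal_span_iff, Set.forall_mem_range]
  exact ⟨fun h j hj => (hsymm.eq _ _).trans (h ⟨j, by omega⟩),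
    fun h i => (hsymm.eq _ _).trans (h i (by omega))⟩

lemma mem_Ugrp_iff_baseChange_iterate_phiT (hb : (bV.baseChange k).Nondegenerate)
    (hsymm : (bV.baseChange k).IsSymm) (hdim : Module.finrank (ZMod p) V = 2 * σ0)
    (hK : IsCharSub σ0 bV K) (hE : ∀ j < σ0, φ^[j] e' ∈ K)
    (hind : LinearIndependent k (fun i : Fin σ0 => φ^[i] e')) {B : k ⊗[ZMod p] V} :
    B ∈ Ugrp K ↔ ∀ j, j + 1 < σ0 →
      bV.baseChange k B (φ^[j + 1] e') = bV.baseChange k B (φ^[j] e') ^ p := by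
  rw [mem_Ugrp, mem_sup_map_phiT_iff hb hsymm hdim hK hE hind]
  refine forall₂_congr fun j _ => ?_
  rw [map_sub, LinearMap.sub_apply, Function.iterate_succ_apply' (⇑φ), baseChange_phiT_phiT,
    sub_eq_zero]

lemma mem_of_mem_Ugrp_of_baseChange_eq_zero (hb : (bV.baseChange k).Nondegenerate)
    (hsymm : (bV.baseChange k).IsSymm) (hdim : Module.finrank (ZMod p) V = 2 * σ0)
    (hK : IsCharSub σ0 bV K) (hE : ∀ j < σ0, φ^[j] e' ∈ K)
    (hind : LinearIndependent k (fun i : Fin σ0 => φ^[i] e')) {B : k ⊗[ZMod p] V}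
    (hBU : B ∈ Ugrp K) (hB : bV.baseChange k B e' = 0) : B ∈ K := by
  refine mem_of_forall_baseChange_iterate_phiT_eq_zero hb hsymm hdim hK hE hind fun j hj => ?_
  induction j with
  | zero => exact hB
  | succ j ih =>
    rw [(mem_Ugrp_iff_baseChange_iterate_phiT hb hsymm hdim hK hE hind).mp hBU j hj,
      ih (by omega), zero_pow (Fact.out : p.Prime).ne_zero]

lemma exists_mem_Ugrp_baseChange_eq (hb : (bV.baseChange k).Nondegenerate)
    (hsymm : (bV.baseChange k).IsSymm) (hdim : Module.finrank (ZMod p) V = 2 * σ0)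
    (hK : IsCharSub σ0 bV K) (hE : ∀ j < σ0, φ^[j] e' ∈ K)
    (hind : LinearIndependent k (fun i : Fin σ0 => φ^[i] e')) (t : k) :
    ∃ B ∈ Ugrp K, bV.baseChange k B e' = t := by
  obtain ⟨B, hB⟩ :=
    exists_baseChange_iterate_phiT_eq hb hsymm hdim hK hE hind fun i => t ^ p ^ (i : ℕ)
  refine ⟨B, (mem_Ugrp_iff_baseChange_iterate_phiT hb hsymm hdim hK hE hind).mpr
    fun j hj => ?_, by simpa using hB ⟨0, hK.pos⟩⟩
  rw [hB ⟨j + 1, hj⟩, hB ⟨j, by omega⟩, ← pow_mul, ← pow_succ]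

end Frobenius

theorem stmt4_general (p : ℕ) [Fact p.Prime]
    (k : Type*) [Field k] [IsAlgClosed k] [CharP k p] [Algebra (ZMod p) k]
    (σ0 : ℕ)
    (V : Type*) [AddCommGroup V] [Module (ZMod p) V]
    (bV : LinearMap.BilinForm (ZMod p) V)
    (hsymm : ∀ x y, bV x y = bV y x) (hnd : Nondeg bV)
    (hdim : Module.finrank (ZMod p) V = 2 * σ0)
    (K : Submodule k (k ⊗[ZMod p] V)) (hK : IsCharSub σ0 bV K)
    (hstrict : KcapV K = ⊥)
    (e : k ⊗[ZMod p] V)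
    (hgen : (⨅ i ∈ Finset.range σ0, phiPow i K) = Submodule.span k {e})
    (he0 : e ≠ 0)
    (e' : k ⊗[ZMod p] V) (he' : (fun m => phiT p k V m)^[σ0 - 1] e' = e) :
    ∃ f : UK K ≃+ k,
      ∀ B : Ugrp K, f (QuotientAddGroup.mk B) =
        bV.baseChange k (B : k ⊗[ZMod p] V) e' := by
  have : FiniteDimensional (ZMod p) V :=
    FiniteDimensional.of_finrank_pos (by have := hK.pos; omega)
  have hb := (LinearMap.BilinForm.Nondegenerate.ofSeparatingLeft hnd).baseChange k
  have hsymm' : (bV.baseChange k).IsSymm :=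
    LinearMap.BilinForm.isSymm_iff.mpr (LinearMap.BilinForm.IsSymm.baseChange k ⟨hsymm⟩)
  have hE : ∀ j < σ0, (phiT p k V)^[j] e' ∈ K := fun j =>
    iterate_mem_of_mem_iInf_phiPow (hgen ▸ Submodule.mem_span_singleton_self e) he'
  have he'0 : e' ≠ 0 := by
    rintro rfl
    exact he0 (he'.symm.trans (Function.iterate_fixed (map_zero _) _))
  have hind := linearIndependent_iterate_phiT hstrict he'0 hE
  let u : Ugrp K →+ k := ((bV.baseChange k).flip e').toAddMonoidHom.comp (Ugrp K).subtype
  have hKu : K.toAddSubgroup.addSubgroupOf (Ugrp K) ≤ u.ker := fun B hB =>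
    hK.1 _ hB _ (hE 0 hK.pos)
  refine ⟨AddEquiv.ofBijective (QuotientAddGroup.lift _ u hKu) ⟨?_, ?_⟩, fun B => rfl⟩
  · rw [injective_iff_map_eq_zero]
    rintro ⟨B⟩ hB
    exact (QuotientAddGroup.eq_zero_iff _).mpr (AddSubgroup.mem_addSubgroupOf.mpr
      (mem_of_mem_Ugrp_of_baseChange_eq_zero hb hsymm' hdim hK hE hind B.2 hB))
  · intro t
    obtain ⟨B, hBU, hB⟩ := exists_mem_Ugrp_baseChange_eq hb hsymm' hdim hK hE hind t
    exact ⟨QuotientAddGroup.mk ⟨B, hBU⟩, hB⟩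

theorem stmt4 (p : ℕ) [Fact p.Prime] (hp : p ≠ 2)
    (k : Type*) [Field k] [IsAlgClosed k] [CharP k p] [Algebra (ZMod p) k]
    (σ0 : ℕ)
    (V : Type*) [AddCommGroup V] [Module (ZMod p) V]
    (bV : LinearMap.BilinForm (ZMod p) V)
    (hsymm : ∀ x y, bV x y = bV y x) (hnd : Nondeg bV) (hnn : NonNeutral bV)
    (hdim : Module.finrank (ZMod p) V = 2 * σ0)
    (K : Submodule k (k ⊗[ZMod p] V)) (hK : IsCharSub σ0 bV K)
    (hstrict : KcapV K = ⊥)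
    (e : k ⊗[ZMod p] V)
    (hgen : (⨅ i ∈ Finset.range σ0, phiPow i K) = Submodule.span k {e})
    (he0 : e ≠ 0)
    (e' : k ⊗[ZMod p] V) (he' : (fun m => phiT p k V m)^[σ0 - 1] e' = e) :
    ∃ f : UK K ≃+ k,
      ∀ B : Ugrp K, f (QuotientAddGroup.mk B) =
        bV.baseChange k (B : k ⊗[ZMod p] V) e' :=
  stmt4_general p k σ0 V bV hsymm hnd hdim K hK hstrict e hgen he0 e' he'
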